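/- Let μ be any probability measure on [−R,R] and let C ≥ 0. Then for every real y with |y| ≥ R(σ2+σ1)/(σ2−σ1) + √( ((σ2²−σ1²)/σ2² + 2C)/(1/σ1² − 1/σ2²) ), one has g(y) + log(σ2/σ1) − C > 0. Consequently, all zeros of the function y ↦ g(y) + log(σ2/σ1) − C lie in the interval [−L, L] with L = R(σ2+σ1)/(σ2−σ1) + √( ((σ2²−σ1²)/σ2² + 2C)/(1/σ1² − 1/σ2²) ). -/

import Mathlib

open MeasureTheory Real Filter

noncomputable section

/-- The `N(0,σ²)` density `φ_σ`. -/
def phiR (σ u : ℝ) : ℝ := (Real.sqrt (2 * π * σ ^ 2))⁻¹ * Real.exp (-u ^ 2 / (2 * σ ^ 2))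

/-- The Gaussian measure `N(x,σ²)` on `ℝ`. -/
def gauss1 (σ x : ℝ) : Measure ℝ :=
  volume.withDensity fun y => ENNReal.ofReal (phiR σ (y - x))

/-- Convolution `μ ∗ N(0,σ²)`. -/
def convGauss1 (μ : Measure ℝ) (σ : ℝ) : Measure ℝ :=
  Measure.map (fun p : ℝ × ℝ => p.1 + p.2) (μ.prod (gauss1 σ 0))

/-- Kullback–Leibler divergence (real-valued). -/
def KL {α : Type*} [MeasurableSpace α] (μ ν : Measure α) : ℝ :=
  ∫ y, Real.log (μ.rnDeriv ν y).toReal ∂μ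

/-- Density `f_i` of `μ ∗ N(0,σ²)`. -/
def outDens (σ : ℝ) (μ : Measure ℝ) (y : ℝ) : ℝ := ∫ x, phiR σ (y - x) ∂μ

/-- The function `g(y) = E[log f₂(y+N)] − log f₁(y)` with `N ∼ N(0, σ2²−σ1²)`. -/
def gFun (σ1 σ2 : ℝ) (μ : Measure ℝ) (y : ℝ) : ℝ :=
  (∫ t : ℝ, Real.log (outDens σ2 μ (y + t)) * phiR (Real.sqrt (σ2 ^ 2 - σ1 ^ 2)) t)
    - Real.log (outDens σ1 μ y)

/-- Secrecy-information of the input distribution `μ`. -/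
def secInfo1 (σ1 σ2 : ℝ) (μ : Measure ℝ) : ℝ :=
  ∫ x, (KL (gauss1 σ1 x) (convGauss1 μ σ1) - KL (gauss1 σ2 x) (convGauss1 μ σ2)) ∂μ

/-- Scalar secrecy-capacity under the amplitude constraint `|X| ≤ R`. -/
def Cs1 (σ1 σ2 R : ℝ) : ℝ :=
  sSup {r : ℝ | ∃ μ : Measure ℝ, IsProbabilityMeasure μ ∧
    (∀ᵐ x ∂μ, |x| ≤ R) ∧ secInfo1 σ1 σ2 μ = r}

/-- Topological support of a measure: points all of whose open neighbourhoods
have positive measure. -/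
def msupport {α : Type*} [TopologicalSpace α] [MeasurableSpace α] (μ : Measure α) : Set α :=
  {x | ∀ U : Set α, IsOpen U → x ∈ U → 0 < μ U}

end

/-!
Because `μ` lives on `[-R, R]`, every output density is squeezed between Gaussian values:
`φ_σ(|y| + R) ≤ f_σ(y)`, and `f_σ(y) ≤ φ_σ(|y| - R)` once `|y| ≥ R`. Take the upper bound
for `f₁` and the lower bound for `f₂`; dominating `2|t|` by `t²/τ + τ` (`τ² = σ2² - σ1²`)
turns the latter into a lower bound for `log f₂(y + N)` that is a quadratic polynomial in
`N`, whose Gaussian mean is explicit. So `g(y) + log(σ2/σ1)` is at least a quadratic in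
`|y|` with leading coefficient `(1/σ1² - 1/σ2²)/2 > 0`, and beyond `L` it exceeds `C`.
-/

open ProbabilityTheory
open scoped NNReal

section Phi

variable {σ : ℝ}

lemma phiR_eq_gaussianPDFReal (σ : ℝ) : phiR σ = gaussianPDFReal 0 (Real.nnabs σ ^ 2) := by
  ext u
  simp [phiR, gaussianPDFReal]

lemma phiR_nonneg (σ u : ℝ) : 0 ≤ phiR σ u := by
  unfold phiR; positivity

lemma phiR_pos (hσ : σ ≠ 0) (u : ℝ) : 0 < phiR σ u := by
  rw [phiR_eq_gaussianPDFReal]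
  exact gaussianPDFReal_pos _ _ _ (by simpa using hσ)

lemma phiR_le_phiR {u w : ℝ} (h : |w| ≤ |u|) : phiR σ u ≤ phiR σ w := by
  unfold phiR
  gcongr ?_ * Real.exp (-?_ / _)
  exact sq_le_sq.2 h

lemma continuous_phiR (σ : ℝ) : Continuous (phiR σ) := by
  unfold phiR; fun_prop

lemma log_phiR (hσ : 0 < σ) (u : ℝ) :
    Real.log (phiR σ u) = -Real.log (Real.sqrt (2 * π)) - Real.log σ - u ^ 2 / (2 * σ ^ 2) := by
  rw [phiR, Real.log_mul (by positivity) (Real.exp_ne_zero _), Real.log_inv, Real.log_exp,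
    Real.sqrt_mul' _ (sq_nonneg σ), Real.sqrt_sq hσ.le, Real.log_mul (by positivity) hσ.ne']
  ring

lemma integral_mul_phiR (hσ : σ ≠ 0) (F : ℝ → ℝ) :
    ∫ t, F t * phiR σ t = ∫ t, F t ∂gaussianReal 0 (Real.nnabs σ ^ 2) := by
  rw [integral_gaussianReal_eq_integral_smul (by simpa using hσ), phiR_eq_gaussianPDFReal]
  simp_rw [smul_eq_mul, mul_comm]

end Phi

section GaussianQuadratic

variable {v : ℝ≥0}

lemma integrable_sq_gaussianReal (m : ℝ) : Integrable (fun t : ℝ => t ^ 2) (gaussianReal m v) :=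
  (memLp_id_gaussianReal 2).integrable_sq

lemma integral_sq_gaussianReal : ∫ t, t ^ 2 ∂gaussianReal 0 v = v := by
  simpa [integral_id_gaussianReal] using
    (variance_eq_integral (μ := gaussianReal 0 v) measurable_id'.aemeasurable).symm.trans
      variance_fun_id_gaussianReal

lemma integrable_quadratic_gaussianReal (m a b c : ℝ) :
    Integrable (fun t : ℝ => a + b * t + c * t ^ 2) (gaussianReal m v) :=
  ((integrable_const a).add
    (((memLp_id_gaussianReal 1).integrable le_rfl).const_mul b)).add
    ((integrable_sq_gaussianReal m).const_mul c)

lemma integral_quadratic_gaussianReal (a b c : ℝ) :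
    ∫ t, a + b * t + c * t ^ 2 ∂gaussianReal 0 v = a + c * v := by
  have hid : Integrable (fun t : ℝ => t) (gaussianReal 0 v) :=
    (memLp_id_gaussianReal 1).integrable le_rfl
  rw [integral_add (f := fun t => a + b * t) ((integrable_const a).add (hid.const_mul b))
      ((integrable_sq_gaussianReal 0).const_mul c),
    integral_add (integrable_const a) (hid.const_mul b), integral_const_mul, integral_const_mul,
    integral_id_gaussianReal, integral_sq_gaussianReal]
  simp

lemma integrable_of_quadratic_le_of_le {F : ℝ → ℝ} {m a b c M : ℝ}
    (hF : AEStronglyMeasurable F (gaussianReal m v))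
    (hlow : ∀ t, a + b * t + c * t ^ 2 ≤ F t) (hup : ∀ t, F t ≤ M) :
    Integrable F (gaussianReal m v) :=
  ((integrable_quadratic_gaussianReal m a b c).abs.add (integrable_const |M|)).mono' hF
    (ae_of_all _ fun t => (abs_le_max_abs_abs (hlow t) (hup t)).trans
      (max_le_add_of_nonneg (abs_nonneg _) (abs_nonneg _)))

lemma le_integral_of_quadratic_le {F : ℝ → ℝ} {a b c M : ℝ}
    (hF : AEStronglyMeasurable F (gaussianReal 0 v))
    (hlow : ∀ t, a + b * t + c * t ^ 2 ≤ F t) (hup : ∀ t, F t ≤ M) :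
    a + c * v ≤ ∫ t, F t ∂gaussianReal 0 v := by
  rw [← integral_quadratic_gaussianReal a b c]
  exact integral_mono (integrable_quadratic_gaussianReal 0 a b c)
    (integrable_of_quadratic_le_of_le hF hlow hup) hlow

end GaussianQuadratic

section OutputDensity

variable {σ R : ℝ} {μ : Measure ℝ}

lemma integrable_phiR_sub [IsFiniteMeasure μ] (σ y : ℝ) :
    Integrable (fun x => phiR σ (y - x)) μ :=
  Integrable.of_bound ((continuous_phiR σ).comp (continuous_sub_left y)).aestronglyMeasurable
    (phiR σ 0) (ae_of_all _ fun x => by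
      rw [Real.norm_of_nonneg (phiR_nonneg _ _)]
      exact phiR_le_phiR (by simp))

lemma outDens_le_phiR [IsProbabilityMeasure μ] {y d : ℝ} (h : ∀ᵐ x ∂μ, |d| ≤ |y - x|) :
    outDens σ μ y ≤ phiR σ d := by
  calc outDens σ μ y ≤ ∫ _, phiR σ d ∂μ :=
        integral_mono_ae (integrable_phiR_sub σ y) (integrable_const _)
          (h.mono fun _ hx => phiR_le_phiR hx)
    _ = phiR σ d := by simp

lemma phiR_le_outDens [IsProbabilityMeasure μ] {y d : ℝ} (h : ∀ᵐ x ∂μ, |y - x| ≤ |d|) :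
    phiR σ d ≤ outDens σ μ y := by
  calc phiR σ d = ∫ _, phiR σ d ∂μ := by simp
    _ ≤ outDens σ μ y :=
        integral_mono_ae (integrable_const _) (integrable_phiR_sub σ y)
          (h.mono fun _ hx => phiR_le_phiR hx)

lemma continuous_outDens [IsFiniteMeasure μ] (σ : ℝ) : Continuous (outDens σ μ) :=
  continuous_of_dominated
    (fun y => ((continuous_phiR σ).comp (continuous_sub_left y)).aestronglyMeasurable)
    (fun _ => ae_of_all _ fun _ => by
      rw [Real.norm_of_nonneg (phiR_nonneg _ _)]
      exact phiR_le_phiR (by simp))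
    (integrable_const (phiR σ 0))
    (ae_of_all _ fun _ => (continuous_phiR σ).comp (continuous_sub_right _))

variable [IsProbabilityMeasure μ] (hsupp : ∀ᵐ x ∂μ, |x| ≤ R)
include hsupp

lemma phiR_abs_add_le_outDens (y : ℝ) : phiR σ (|y| + R) ≤ outDens σ μ y :=
  phiR_le_outDens (hsupp.mono fun x hx =>
    ((abs_sub y x).trans (by linarith)).trans (le_abs_self _))

lemma outDens_pos (hσ : σ ≠ 0) (y : ℝ) : 0 < outDens σ μ y :=
  (phiR_pos hσ _).trans_le (phiR_abs_add_le_outDens hsupp y)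

lemma outDens_le_phiR_abs_sub {y : ℝ} (hy : R ≤ |y|) : outDens σ μ y ≤ phiR σ (|y| - R) :=
  outDens_le_phiR (hsupp.mono fun x hx => by
    rw [abs_of_nonneg (sub_nonneg.2 hy)]
    linarith [abs_sub_abs_le_abs_sub y x])

end OutputDensity

lemma two_mul_abs_le_sq_div_add {τ : ℝ} (hτ : 0 < τ) (t : ℝ) : 2 * |t| ≤ t ^ 2 / τ + τ := by
  rw [div_add' _ _ _ hτ.ne', le_div_iff₀ hτ, ← sq_abs t]
  nlinarith [sq_nonneg (|t| - τ)]

section LogBounds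

variable {σ1 σ2 R : ℝ} {μ : Measure ℝ} [IsProbabilityMeasure μ]

lemma log_outDens_le (hσ : 0 < σ1) (hsupp : ∀ᵐ x ∂μ, |x| ≤ R) {y : ℝ} (hy : R ≤ |y|) :
    Real.log (outDens σ1 μ y)
      ≤ -Real.log (Real.sqrt (2 * π)) - Real.log σ1 - (|y| - R) ^ 2 / (2 * σ1 ^ 2) := by
  rw [← log_phiR hσ]
  exact Real.log_le_log (outDens_pos hsupp hσ.ne' y) (outDens_le_phiR_abs_sub hsupp hy)

lemma le_integral_log_outDens_mul_phiR (hσ : 0 < σ2) (hR : 0 ≤ R) (hsupp : ∀ᵐ x ∂μ, |x| ≤ R)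
    {τ : ℝ} (hτ : 0 < τ) (y : ℝ) :
    -Real.log (Real.sqrt (2 * π)) - Real.log σ2
        - ((|y| + R) ^ 2 + τ ^ 2 + 2 * R * τ) / (2 * σ2 ^ 2)
      ≤ ∫ t, Real.log (outDens σ2 μ (y + t)) * phiR τ t := by
  set K := -Real.log (Real.sqrt (2 * π)) - Real.log σ2
  have hmeas : Measurable fun t => Real.log (outDens σ2 μ (y + t)) :=
    Real.measurable_log.comp ((continuous_outDens σ2).measurable.comp (measurable_const_add y))
  have hup (t : ℝ) : Real.log (outDens σ2 μ (y + t)) ≤ K := by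
    have hf : outDens σ2 μ (y + t) ≤ phiR σ2 0 :=
      outDens_le_phiR (ae_of_all _ fun _ => by simp)
    simpa [log_phiR hσ, K] using Real.log_le_log (outDens_pos hsupp hσ.ne' _) hf
  have hlow (t : ℝ) :
      (K - (y ^ 2 + 2 * R * |y| + R ^ 2 + R * τ) / (2 * σ2 ^ 2)) + (-y / σ2 ^ 2) * t
        + (-(1 + R / τ) / (2 * σ2 ^ 2)) * t ^ 2 ≤ Real.log (outDens σ2 μ (y + t)) := by
    have hsq : (|y + t| + R) ^ 2 ≤ (y + t) ^ 2 + 2 * R * |y| + R * (t ^ 2 / τ + τ) + R ^ 2 := by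
      nlinarith [sq_abs (y + t), abs_add_le y t, two_mul_abs_le_sq_div_add hτ t]
    calc _ = K - ((y + t) ^ 2 + 2 * R * |y| + R * (t ^ 2 / τ + τ) + R ^ 2) / (2 * σ2 ^ 2) := by
          field_simp; ring
      _ ≤ K - (|y + t| + R) ^ 2 / (2 * σ2 ^ 2) := by gcongr
      _ = Real.log (phiR σ2 (|y + t| + R)) := (log_phiR hσ _).symm
      _ ≤ Real.log (outDens σ2 μ (y + t)) :=
          Real.log_le_log (phiR_pos hσ.ne' _) (phiR_abs_add_le_outDens hsupp _)
  rw [integral_mul_phiR hτ.ne']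
  calc _ = (K - (y ^ 2 + 2 * R * |y| + R ^ 2 + R * τ) / (2 * σ2 ^ 2))
        + (-(1 + R / τ) / (2 * σ2 ^ 2)) * ((Real.nnabs τ ^ 2 : ℝ≥0) : ℝ) := by
        simp only [NNReal.coe_pow, Real.coe_nnabs, sq_abs]
        rw [← sq_abs y]
        field_simp
        ring
    _ ≤ _ := le_integral_of_quadratic_le hmeas.aestronglyMeasurable hlow hup

end LogBounds

noncomputable def gFunLowerBound (σ1 σ2 R a : ℝ) : ℝ :=
  (a - R) ^ 2 / (2 * σ1 ^ 2)
    - ((a + R) ^ 2 + (σ2 ^ 2 - σ1 ^ 2) + 2 * R * √(σ2 ^ 2 - σ1 ^ 2)) / (2 * σ2 ^ 2)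

lemma le_gFun {σ1 σ2 R : ℝ} {μ : Measure ℝ} [IsProbabilityMeasure μ] (hσ1 : 0 < σ1)
    (hσ12 : σ1 < σ2) (hR : 0 ≤ R) (hsupp : ∀ᵐ x ∂μ, |x| ≤ R) {y : ℝ} (hy : R ≤ |y|) :
    Real.log σ1 - Real.log σ2 + gFunLowerBound σ1 σ2 R |y| ≤ gFun σ1 σ2 μ y := by
  have hd2 : 0 < σ2 ^ 2 - σ1 ^ 2 := by nlinarith
  have hlog1 := log_outDens_le hσ1 hsupp hy
  have hlog2 := le_integral_log_outDens_mul_phiR (hσ1.trans hσ12) hR hsupp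
    (Real.sqrt_pos.2 hd2) y
  rw [Real.sq_sqrt hd2.le] at hlog2
  unfold gFun gFunLowerBound
  linarith

lemma add_le_sq_sub_sq_of_threshold_le {σ1 σ2 R s a : ℝ} (hσ1 : 0 < σ1) (hσ12 : σ1 < σ2)
    (hR : 0 ≤ R) (hs0 : 0 ≤ s) (ha : R * (σ2 + σ1) / (σ2 - σ1) + s ≤ a) :
    (σ2 ^ 2 - σ1 ^ 2) * s ^ 2 + 4 * R * σ1 * σ2 * s
      ≤ ((a - R) * σ2) ^ 2 - ((a + R) * σ1) ^ 2 := by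
  have hd : 0 < σ2 - σ1 := sub_pos.2 hσ12
  have hm : R * (σ2 + σ1) ≤ (a - s) * (σ2 - σ1) := by
    rw [← div_le_iff₀ hd]; linarith
  -- the right-hand side is `u * w` `u = (a - R) σ2 - (a + R) σ1`, `w = (a - R) σ2 + (a + R) σ1`
  have hu : (σ2 - σ1) * s ≤ (a - R) * σ2 - (a + R) * σ1 := by nlinarith
  have hw : (σ2 ^ 2 - σ1 ^ 2) * s + 4 * R * σ1 * σ2
      ≤ (σ2 - σ1) * ((a - R) * σ2 + (a + R) * σ1) := by
    nlinarith
  have hw0 : 0 ≤ (a - R) * σ2 + (a + R) * σ1 := by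
    have hσ2 : 0 < σ2 := hσ1.trans hσ12
    refine nonneg_of_mul_nonneg_right (hw.trans' ?_) hd
    have : 0 ≤ σ2 ^ 2 - σ1 ^ 2 := by nlinarith
    positivity
  nlinarith [mul_le_mul_of_nonneg_right hu hw0, mul_le_mul_of_nonneg_left hw hs0]

lemma lt_gFunLowerBound {σ1 σ2 R C s a : ℝ} (hσ1 : 0 < σ1) (hσ12 : σ1 < σ2) (hR : 0 < R)
    (hC : 0 ≤ C) (hs0 : 0 ≤ s)
    (hs : (σ2 ^ 2 - σ1 ^ 2) / σ2 ^ 2 + 2 * C ≤ s ^ 2 * (1 / σ1 ^ 2 - 1 / σ2 ^ 2))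
    (ha : R * (σ2 + σ1) / (σ2 - σ1) + s ≤ a) :
    C < gFunLowerBound σ1 σ2 R a := by
  unfold gFunLowerBound
  have hσ2 : 0 < σ2 := hσ1.trans hσ12
  have hd2 : 0 < σ2 ^ 2 - σ1 ^ 2 := by nlinarith
  set τ := √(σ2 ^ 2 - σ1 ^ 2)
  have hτ2 : τ ^ 2 = σ2 ^ 2 - σ1 ^ 2 := Real.sq_sqrt hd2.le
  have hτ : τ ≤ σ2 := Real.sqrt_le_iff.2 ⟨hσ2.le, by nlinarith⟩
  have hsσ : (σ2 ^ 2 - σ1 ^ 2) * σ1 ^ 2 + 2 * C * σ1 ^ 2 * σ2 ^ 2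
      ≤ (σ2 ^ 2 - σ1 ^ 2) * s ^ 2 := by
    have := mul_le_mul_of_nonneg_right hs (by positivity : 0 ≤ σ1 ^ 2 * σ2 ^ 2)
    field_simp at this
    nlinarith
  have hs1 : σ1 ≤ s := by
    refine (sq_le_sq₀ hσ1.le hs0).1 (le_of_mul_le_mul_left ?_ hd2)
    nlinarith [mul_nonneg hC (by positivity : 0 ≤ σ1 ^ 2 * σ2 ^ 2)]
  have hprod := add_le_sq_sub_sq_of_threshold_le hσ1 hσ12 hR.le hs0 ha
  have hRτ : 2 * R * τ * σ1 ^ 2 < 4 * R * σ1 * σ2 * s :=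
    calc 2 * R * τ * σ1 ^ 2 ≤ 2 * R * σ2 * σ1 ^ 2 := by gcongr
      _ < 4 * R * σ1 * σ2 * σ1 := by nlinarith [mul_pos (mul_pos hR hσ2) (pow_pos hσ1 2)]
      _ ≤ 4 * R * σ1 * σ2 * s := by gcongr
  have hgap : 0 < (a - R) ^ 2 * σ2 ^ 2 - ((a + R) ^ 2 + τ ^ 2 + 2 * R * τ) * σ1 ^ 2
      - 2 * C * σ1 ^ 2 * σ2 ^ 2 := by
    nlinarith
  have heq : (a - R) ^ 2 / (2 * σ1 ^ 2) - ((a + R) ^ 2 + τ ^ 2 + 2 * R * τ) / (2 * σ2 ^ 2) - C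
      = ((a - R) ^ 2 * σ2 ^ 2 - ((a + R) ^ 2 + τ ^ 2 + 2 * R * τ) * σ1 ^ 2
        - 2 * C * σ1 ^ 2 * σ2 ^ 2) / (2 * σ1 ^ 2 * σ2 ^ 2) := by
    field_simp
  rw [← hτ2, ← sub_pos, heq]
  positivity

/-- For any probability measure `μ` on `[−R,R]` and any `C ≥ 0`,
`g(y) + log(σ2/σ1) − C > 0` whenever `|y| ≥ L`; consequently all zeros of
`y ↦ g(y) + log(σ2/σ1) − C` lie in `[−L, L]`. -/
theorem gFun_positive_outside_interval
    (σ1 σ2 R : ℝ) (hσ1 : 0 < σ1) (hσ12 : σ1 < σ2) (hR : 0 < R)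
    (μ : Measure ℝ) (hprob : IsProbabilityMeasure μ)
    (hsupp : ∀ᵐ x ∂μ, |x| ≤ R)
    (C : ℝ) (hC : 0 ≤ C) :
    (∀ y : ℝ,
      R * (σ2 + σ1) / (σ2 - σ1) +
          Real.sqrt (((σ2 ^ 2 - σ1 ^ 2) / σ2 ^ 2 + 2 * C) /
            (1 / σ1 ^ 2 - 1 / σ2 ^ 2)) ≤ |y| →
      0 < gFun σ1 σ2 μ y + Real.log (σ2 / σ1) - C) ∧
    (∀ y : ℝ, gFun σ1 σ2 μ y + Real.log (σ2 / σ1) - C = 0 →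
      y ∈ Set.Icc
        (-(R * (σ2 + σ1) / (σ2 - σ1) +
            Real.sqrt (((σ2 ^ 2 - σ1 ^ 2) / σ2 ^ 2 + 2 * C) /
              (1 / σ1 ^ 2 - 1 / σ2 ^ 2))))
        (R * (σ2 + σ1) / (σ2 - σ1) +
          Real.sqrt (((σ2 ^ 2 - σ1 ^ 2) / σ2 ^ 2 + 2 * C) /
            (1 / σ1 ^ 2 - 1 / σ2 ^ 2)))) := by
  have hσ2 : 0 < σ2 := hσ1.trans hσ12
  have hD : 0 < 1 / σ1 ^ 2 - 1 / σ2 ^ 2 :=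
    sub_pos.2 (one_div_lt_one_div_of_lt (by positivity) (by gcongr))
  set s := Real.sqrt (((σ2 ^ 2 - σ1 ^ 2) / σ2 ^ 2 + 2 * C) / (1 / σ1 ^ 2 - 1 / σ2 ^ 2))
  have hs0 : 0 ≤ s := Real.sqrt_nonneg _
  have hs : (σ2 ^ 2 - σ1 ^ 2) / σ2 ^ 2 + 2 * C ≤ s ^ 2 * (1 / σ1 ^ 2 - 1 / σ2 ^ 2) := by
    have hnum : 0 ≤ (σ2 ^ 2 - σ1 ^ 2) / σ2 ^ 2 + 2 * C :=
      add_nonneg (div_nonneg (by nlinarith) (sq_nonneg _)) (by positivity)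
    rw [Real.sq_sqrt (div_nonneg hnum hD.le), div_mul_cancel₀ _ hD.ne']
  have hRle : R ≤ R * (σ2 + σ1) / (σ2 - σ1) := by
    rw [le_div_iff₀ (sub_pos.2 hσ12)]; nlinarith
  have hpos (y : ℝ) (hy : R * (σ2 + σ1) / (σ2 - σ1) + s ≤ |y|) :
      0 < gFun σ1 σ2 μ y + Real.log (σ2 / σ1) - C := by
    have hgap := lt_gFunLowerBound hσ1 hσ12 hR hC hs0 hs hy
    have hg := le_gFun hσ1 hσ12 hR.le hsupp (by linarith)
    rw [Real.log_div hσ2.ne' hσ1.ne']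
    linarith
  refine ⟨hpos, fun y hy0 => ?_⟩
  rw [Set.mem_Icc, ← abs_le]
  by_contra h
  exact (hpos y (not_le.1 h).le).ne' hy0
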